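/- (Pascal's Theorem, parametrized form) Let t₁,…,t₆ be distinct complex numbers and A_j = (t_j : t_j² : 1) six points on the conic x² = yz in ℙ²(ℂ). Let B₁ be the intersection of lines A₁A₂ and A₄A₅, B₂ the intersection of A₂A₃ and A₅A₆, and B₃ the intersection of A₃A₄ and A₆A₁ (as projective lines, opposite sides always meet). Then B₁, B₂, B₃ are collinear. -/
import Mathlib


/-- Cross product of homogeneous coordinate vectors: gives the line through two points,
or the intersection point of two lines. -/
def cross (u v : Fin 3 → ℂ) : Fin 3 → ℂ :=
  ![u 1 * v 2 - u 2 * v 1, u 2 * v 0 - u 0 * v 2, u 0 * v 1 - u 1 * v 0]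

/-- Pascal's theorem for the conic x² = yz with points A_j = (t_j : t_j² : 1):
the intersections B₁ = A₁A₂ ∩ A₄A₅, B₂ = A₂A₃ ∩ A₅A₆, B₃ = A₃A₄ ∩ A₆A₁ of the
pairs of opposite sides of the hexagon are collinear. -/
theorem pascal_conic (t : Fin 6 → ℂ) (ht : Function.Injective t)
    (A : Fin 6 → Fin 3 → ℂ) (hA : ∀ j, A j = ![t j, (t j) ^ 2, 1])
    (B1 B2 B3 : Fin 3 → ℂ)
    (hB1 : B1 = cross (cross (A 0) (A 1)) (cross (A 3) (A 4)))
    (hB2 : B2 = cross (cross (A 1) (A 2)) (cross (A 4) (A 5)))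
    (hB3 : B3 = cross (cross (A 2) (A 3)) (cross (A 5) (A 0))) :
    Matrix.det (Matrix.of ![B1, B2, B3]) = 0 := by
  subst hB1 hB2 hB3
  simp only [hA, Matrix.det_fin_three, cross, Matrix.of_apply, Matrix.cons_val', Matrix.cons_val_zero, Matrix.cons_val_one, Matrix.head_cons, Matrix.cons_val_two, Matrix.tail_cons, Matrix.empty_val', Matrix.cons_val_fin_one, Matrix.head_fin_const]
  ring
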